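/- Let G be a Hausdorff locally compact group and N a fully invariant open subgroup of G (i.e., ψ(N) ⊆ N for every continuous endomorphism ψ of G). If AT(N) holds (for every continuous endomorphism ψ of N and every ψ-invariant closed normal subgroup K of N one has h_top(ψ) = h_top(ψ|_K) + h_top(ψ̄_{N/K})), then AT(G) holds: for every continuous endomorphism φ of G and every φ-invariant closed normal subgroup H of G, h_top(φ) = h_top(φ|_H) + h_top(φ̄_{G/H}). -/

import Mathlib

open MeasureTheory Filter Topology Pointwise
open scoped ENNReal NNReal Classical

/-- The `n`-th `φ`-cotrajectory of `U`: `U ∩ φ⁻¹(U) ∩ … ∩ φ⁻⁽ⁿ⁻¹⁾(U)`. -/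
def cotraj {G : Type*} (φ : G → G) (U : Set G) (n : ℕ) : Set G :=
  ⋂ k ∈ Finset.range n, (φ^[k]) ⁻¹' U

/-- Topological entropy of a (continuous) endomorphism of a locally compact Hausdorff
topological group, computed with respect to a left Haar measure:
`h_top(φ) = sup_U limsup_n (−log μ(C_n(φ,U)))/n`, the supremum over all compact
neighborhoods `U` of `1`. -/
noncomputable def mulHtop {G : Type*} [Group G] [TopologicalSpace G] (φ : G → G) : ℝ≥0∞ :=
  letI : MeasurableSpace G := borel G
  haveI : BorelSpace G := ⟨rfl⟩
  if h : IsTopologicalGroup G ∧ T2Space G ∧ LocallyCompactSpace G then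
    haveI := h.1
    haveI := h.2.1
    haveI := h.2.2
    ⨆ U ∈ {U : Set G | IsCompact U ∧ U ∈ 𝓝 (1 : G)},
      Filter.atTop.limsup fun n : ℕ =>
        ENNReal.ofReal
          ((-Real.log ((MeasureTheory.Measure.haar (cotraj φ U n)).toReal)) / n)
  else 0

/-- The restriction of an endomorphism to an invariant subgroup
(junk value `1` if the subgroup is not invariant). -/
noncomputable def mulSubHom {G : Type*} [Group G] (φ : G →* G) (H : Subgroup G) : H →* H :=
  if h : H ≤ H.comap φ then (φ.domRestrict H).codRestrict H (fun x => h x.2) else 1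

/-- The endomorphism induced on the quotient by an invariant normal subgroup
(junk value `1` if the subgroup is not invariant). -/
noncomputable def mulQuotHom {G : Type*} [Group G] (φ : G →* G) (H : Subgroup G) [H.Normal] :
    G ⧸ H →* G ⧸ H :=
  if h : H ≤ H.comap φ then QuotientGroup.map H H φ h else 1

/-- The Addition Theorem `AT(G)` for a topological group `G`: for every continuous
endomorphism `φ` and every `φ`-invariant closed normal subgroup `H`,
`h_top(φ) = h_top(φ|_H) + h_top(φ̄_{G/H})`. -/
def MulAT (G : Type*) [Group G] [TopologicalSpace G] : Prop :=
  ∀ (φ : G →* G), Continuous φ → ∀ (H : Subgroup G), IsClosed (H : Set G) →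
    ∀ (hn : H.Normal), H ≤ H.comap φ →
      letI := hn
      mulHtop ⇑φ = mulHtop ⇑(mulSubHom φ H) + mulHtop ⇑(mulQuotHom φ H)

/-!
Topological entropy can be computed from arbitrarily small compact neighbourhoods of `1` and
does not depend on the choice of Haar measure. Hence it is preserved by an open embedding of
groups intertwining two endomorphisms: pulling the Haar measure back along the embedding gives
a Haar measure for which the cotrajectories correspond exactly. For an open subgroup `N`, the
inclusions `N → G`, `H ∩ N → H` and `N ⧸ (H ∩ N) → G ⧸ H` are such embeddings, so the three
entropies in `AT(G)` equal those in `AT(N)` for `φ|_N` and `H ∩ N`.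
-/

section Cotraj

variable {X Y : Type*}

lemma mem_cotraj {φ : X → X} {U : Set X} {n : ℕ} {x : X} :
    x ∈ cotraj φ U n ↔ ∀ k < n, φ^[k] x ∈ U := by
  simp [cotraj]

lemma cotraj_mono (φ : X → X) {U V : Set X} (h : U ⊆ V) (n : ℕ) :
    cotraj φ U n ⊆ cotraj φ V n := fun _ hx =>
  mem_cotraj.2 fun k hk => h (mem_cotraj.1 hx k hk)

lemma cotraj_subset (φ : X → X) (U : Set X) {n : ℕ} (hn : n ≠ 0) : cotraj φ U n ⊆ U :=
  fun _ hx => by simpa using mem_cotraj.1 hx 0 (Nat.pos_of_ne_zero hn)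

lemma cotraj_mem_nhds [TopologicalSpace X] {φ : X → X} (hφ : Continuous φ) {x : X}
    (hx : φ x = x) {U : Set X} (hU : U ∈ 𝓝 x) (n : ℕ) : cotraj φ U n ∈ 𝓝 x :=
  (biInter_finset_mem _).2 fun k _ =>
    (hφ.iterate k).continuousAt.preimage_mem_nhds (by rwa [Function.iterate_fixed hx k])

lemma image_cotraj {j : X → Y} (hj : Function.Injective j) {φ : X → X} {ψ : Y → Y}
    (h : Function.Semiconj j φ ψ) (U : Set X) {n : ℕ} (hn : n ≠ 0) :
    j '' cotraj φ U n = cotraj ψ (j '' U) n := by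
  ext y
  constructor
  · rintro ⟨x, hx, rfl⟩
    refine mem_cotraj.2 fun k hk => ?_
    rw [← (h.iterate_right k).eq x]
    exact Set.mem_image_of_mem j (mem_cotraj.1 hx k hk)
  · intro hy
    obtain ⟨x, -, rfl⟩ := cotraj_subset ψ _ hn hy
    refine ⟨x, mem_cotraj.2 fun k hk => ?_, rfl⟩
    obtain ⟨u, hu, hux⟩ := mem_cotraj.1 hy k hk
    rw [← (h.iterate_right k).eq x] at hux
    rwa [← hj hux]

end Cotraj

lemma limsup_ofReal_div_le_of_le_add {a b : ℕ → ℝ} {C : ℝ}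
    (h : ∀ᶠ n in atTop, a n ≤ b n + C) :
    atTop.limsup (fun n : ℕ => ENNReal.ofReal (a n / n)) ≤
      atTop.limsup (fun n : ℕ => ENNReal.ofReal (b n / n)) := by
  have hC : Tendsto (fun n : ℕ => ENNReal.ofReal (C / n)) atTop (𝓝 0) := by
    simpa using ENNReal.tendsto_ofReal (tendsto_const_div_atTop_nhds_zero_nat C)
  calc atTop.limsup (fun n : ℕ => ENNReal.ofReal (a n / n))
      ≤ atTop.limsup ((fun n : ℕ => ENNReal.ofReal (b n / n)) +
          fun n : ℕ => ENNReal.ofReal (C / n)) := by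
        refine limsup_le_limsup ?_ (by isBoundedDefault) (by isBoundedDefault)
        filter_upwards [h] with n hn
        refine (ENNReal.ofReal_le_ofReal ?_).trans ENNReal.ofReal_add_le
        rw [← add_div]
        gcongr
    _ = _ := ENNReal.limsup_add_of_right_tendsto_zero hC _

lemma limsup_ofReal_div_eq_of_abs_sub_le {a b : ℕ → ℝ} {C : ℝ}
    (h : ∀ᶠ n in atTop, |a n - b n| ≤ C) :
    atTop.limsup (fun n : ℕ => ENNReal.ofReal (a n / n)) =
      atTop.limsup (fun n : ℕ => ENNReal.ofReal (b n / n)) :=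
  le_antisymm
    (limsup_ofReal_div_le_of_le_add (h.mono fun _ hn => by linarith [(abs_sub_le_iff.1 hn).1]))
    (limsup_ofReal_div_le_of_le_add (h.mono fun _ hn => by linarith [(abs_sub_le_iff.1 hn).2]))

lemma abs_log_mul_sub_log_le {c : ℝ} (hc : 0 < c) (m : ℝ) :
    |Real.log (c * m) - Real.log m| ≤ |Real.log c| := by
  rcases eq_or_ne m 0 with rfl | hm
  · simp
  · rw [Real.log_mul hc.ne' hm, add_sub_cancel_right]

noncomputable def localEntropy {X : Type*} [MeasurableSpace X] (μ : Measure X) (φ : X → X)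
    (U : Set X) : ℝ≥0∞ :=
  atTop.limsup fun n : ℕ => ENNReal.ofReal ((-Real.log (μ (cotraj φ U n)).toReal) / n)

section LocalEntropy

lemma localEntropy_anti {X : Type*} [TopologicalSpace X] [MeasurableSpace X] (μ : Measure X)
    [μ.IsOpenPosMeasure] [IsFiniteMeasureOnCompacts μ] {φ : X → X} (hφ : Continuous φ) {x : X}
    (hx : φ x = x) {U V : Set X} (hU : U ∈ 𝓝 x) (hV : IsCompact V) (hUV : U ⊆ V) :
    localEntropy μ φ V ≤ localEntropy μ φ U := by
  refine limsup_le_limsup ?_ (by isBoundedDefault) (by isBoundedDefault)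
  filter_upwards [eventually_ne_atTop 0] with n hn
  have hle : μ (cotraj φ U n) ≤ μ (cotraj φ V n) := measure_mono (cotraj_mono φ hUV n)
  have hfin : μ (cotraj φ V n) ≠ ∞ :=
    ((measure_mono (cotraj_subset φ V hn)).trans_lt hV.measure_lt_top).ne
  have hpos : 0 < (μ (cotraj φ U n)).toReal :=
    ENNReal.toReal_pos (μ.measure_pos_of_mem_nhds (cotraj_mem_nhds hφ hx hU n)).ne'
      (ne_top_of_le_ne_top hfin hle)
  gcongr

variable {G : Type*} [Group G] [TopologicalSpace G] [IsTopologicalGroup G]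
  [LocallyCompactSpace G] [MeasurableSpace G] [BorelSpace G]

lemma localEntropy_eq_of_isHaarMeasure (μ ν : Measure G) [μ.IsHaarMeasure] [ν.IsHaarMeasure]
    (φ : G → G) {U : Set G} (hU : IsCompact U) : localEntropy ν φ U = localEntropy μ φ U := by
  have hc : (0 : ℝ) < ν.haarScalarFactor μ := Measure.haarScalarFactor_pos_of_isHaarMeasure _ _
  refine limsup_ofReal_div_eq_of_abs_sub_le (C := |Real.log (ν.haarScalarFactor μ)|) ?_
  filter_upwards [eventually_ne_atTop 0] with n hn
  rw [Measure.measure_isMulInvariant_eq_smul_of_isCompact_closure ν μ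
    (hU.closure_of_subset (cotraj_subset φ U hn)), ENNReal.toReal_smul, NNReal.smul_def,
    smul_eq_mul, neg_sub_neg, abs_sub_comm]
  exact abs_log_mul_sub_log_le hc _

lemma mulHtop_eq_iSup_localEntropy [T2Space G] (μ : Measure G) [μ.IsHaarMeasure] (φ : G → G) :
    mulHtop φ = ⨆ U ∈ {U : Set G | IsCompact U ∧ U ∈ 𝓝 (1 : G)}, localEntropy μ φ U := by
  obtain rfl := ‹BorelSpace G›.measurable_eq
  let := borel G
  rw [mulHtop, dif_pos ⟨‹_›, ‹_›, ‹_›⟩]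
  exact biSup_congr fun U hU => localEntropy_eq_of_isHaarMeasure _ _ φ hU.1

end LocalEntropy

lemma localEntropy_comap {X Y : Type*} [TopologicalSpace X] [MeasurableSpace X] [BorelSpace X]
    [TopologicalSpace Y] [MeasurableSpace Y] [BorelSpace Y] {j : X → Y} (hj : IsOpenEmbedding j)
    {φ : X → X} {ψ : Y → Y} (h : Function.Semiconj j φ ψ) (μ : Measure Y) (U : Set X) :
    localEntropy (μ.comap j) φ U = localEntropy μ ψ (j '' U) := by
  refine limsup_congr ?_
  filter_upwards [eventually_ne_atTop 0] with n hn
  rw [hj.measurableEmbedding.comap_apply, image_cotraj hj.injective h U hn]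

theorem mulHtop_eq_of_isOpenEmbedding {G₁ G₂ : Type*} [Group G₁] [TopologicalSpace G₁]
    [IsTopologicalGroup G₁] [Group G₂] [TopologicalSpace G₂] [IsTopologicalGroup G₂]
    [T2Space G₂] [LocallyCompactSpace G₂] (j : G₁ →* G₂) (hj : IsOpenEmbedding j)
    {φ₁ : G₁ → G₁} {φ₂ : G₂ → G₂} (hφ₂ : Continuous φ₂) (hφ₂1 : φ₂ 1 = 1)
    (h : Function.Semiconj j φ₁ φ₂) : mulHtop φ₁ = mulHtop φ₂ := by
  have := hj.isEmbedding.t2Space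
  have := hj.locallyCompactSpace
  let := borel G₁
  have : BorelSpace G₁ := ⟨rfl⟩
  let := borel G₂
  have : BorelSpace G₂ := ⟨rfl⟩
  set μ : Measure G₂ := Measure.haar
  have := Measure.IsHaarMeasure.comap (mH := inferInstance) μ hj
  rw [mulHtop_eq_iSup_localEntropy (μ.comap j), mulHtop_eq_iSup_localEntropy μ]
  apply le_antisymm
  · refine iSup₂_le fun U hU => ?_
    rw [localEntropy_comap hj h]
    exact le_iSup₂_of_le (j '' U)
      ⟨hU.1.image hj.continuous, by simpa using hj.isOpenMap.image_mem_nhds hU.2⟩ le_rfl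
  · refine iSup₂_le fun U hU => ?_
    -- shrink `U` into the range of `j`, which only increases the local entropy
    obtain ⟨V, hV, hVj, hVc⟩ := local_compact_nhds (hj.isOpen_range.mem_nhds ⟨1, map_one j⟩)
    have hUV : U ∩ V ∈ 𝓝 (1 : G₂) := inter_mem hU.2 hV
    have hUVj : U ∩ V ⊆ Set.range j := fun _ hx => hVj hx.2
    calc localEntropy μ φ₂ U ≤ localEntropy μ φ₂ (U ∩ V) :=
          localEntropy_anti μ hφ₂ hφ₂1 hUV hU.1 Set.inter_subset_left
      _ = localEntropy (μ.comap j) φ₁ (j ⁻¹' (U ∩ V)) := by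
          rw [localEntropy_comap hj h, Set.image_preimage_eq_of_subset hUVj]
      _ ≤ _ := le_iSup₂_of_le (j ⁻¹' (U ∩ V))
          ⟨hj.isInducing.isCompact_preimage' (hU.1.inter hVc) hUVj,
            hj.continuous.continuousAt.preimage_mem_nhds (by rwa [map_one])⟩ le_rfl

section Restriction

variable {G : Type*} [Group G]

lemma mulSubHom_coe {φ : G →* G} {H : Subgroup G} (h : H ≤ H.comap φ) (x : H) :
    (mulSubHom φ H x : G) = φ x := by
  rw [mulSubHom, dif_pos h]
  rfl

lemma mulQuotHom_mk {φ : G →* G} {H : Subgroup G} [H.Normal] (h : H ≤ H.comap φ) (x : G) :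
    mulQuotHom φ H x = φ x := by
  rw [mulQuotHom, dif_pos h]
  rfl

lemma continuous_mulSubHom [TopologicalSpace G] {φ : G →* G} (hφ : Continuous φ)
    {H : Subgroup G} (h : H ≤ H.comap φ) : Continuous (mulSubHom φ H) := by
  rw [mulSubHom, dif_pos h]
  exact (hφ.comp continuous_subtype_val).subtype_mk _

lemma continuous_mulQuotHom [TopologicalSpace G] [IsTopologicalGroup G] {φ : G →* G}
    (hφ : Continuous φ) {H : Subgroup G} [H.Normal] (h : H ≤ H.comap φ) :
    Continuous (mulQuotHom φ H) := by
  rw [(QuotientGroup.isQuotientMap_mk H).continuous_iff]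
  exact (QuotientGroup.continuous_mk.comp hφ).congr fun x => (mulQuotHom_mk h x).symm

lemma subgroupOf_le_comap_mulSubHom {φ : G →* G} {N H : Subgroup G} (hN : N ≤ N.comap φ)
    (hH : H ≤ H.comap φ) : H.subgroupOf N ≤ (H.subgroupOf N).comap (mulSubHom φ N) :=
  fun x hx => by
    simpa [Subgroup.mem_subgroupOf, mulSubHom_coe hN] using hH (Subgroup.mem_subgroupOf.1 hx)

end Restriction

section OpenSubgroup

variable {G : Type*} [Group G] [TopologicalSpace G] {N : Subgroup G}

def subgroupOfInclusion (H N : Subgroup G) : H.subgroupOf N →* H :=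
  (N.subtype.comp (H.subgroupOf N).subtype).codRestrict H fun x => x.2

lemma isOpenEmbedding_subgroupOfInclusion (hN : IsOpen (N : Set G)) (H : Subgroup G) :
    IsOpenEmbedding (subgroupOfInclusion H N) := by
  have hval : IsEmbedding (Subtype.val ∘ Subtype.val : H.subgroupOf N → G) :=
    IsEmbedding.subtypeVal.comp IsEmbedding.subtypeVal
  refine ⟨.of_comp ((continuous_subtype_val.comp continuous_subtype_val).subtype_mk _)
    continuous_subtype_val hval, ?_⟩
  have hrange : Set.range (subgroupOfInclusion H N) = Subtype.val ⁻¹' (N : Set G) :=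
    Set.ext fun y => ⟨fun ⟨x, hx⟩ => hx ▸ x.1.2, fun hy => ⟨⟨⟨y, hy⟩, y.2⟩, rfl⟩⟩
  exact hrange ▸ hN.preimage continuous_subtype_val

variable [IsTopologicalGroup G]

lemma isOpenEmbedding_quotientMap_subgroupOf (hN : IsOpen (N : Set G)) (H : Subgroup G)
    [H.Normal] : IsOpenEmbedding (QuotientGroup.map (H.subgroupOf N) H N.subtype le_rfl) := by
  set j := QuotientGroup.map (H.subgroupOf N) H N.subtype le_rfl
  refine .of_continuous_injective_isOpenMap ?_ ?_ ?_
  · rw [(QuotientGroup.isQuotientMap_mk _).continuous_iff]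
    exact QuotientGroup.continuous_mk.comp continuous_subtype_val
  · rintro ⟨x⟩ ⟨y⟩ hxy
    exact QuotientGroup.eq.2 (Subgroup.mem_subgroupOf.2 (QuotientGroup.eq.1 hxy))
  · intro V hV
    -- `j '' V` is the image in `G ⧸ H` of the open set `mk⁻¹' V ⊆ N ⊆ G`
    have hjV : j '' V = (↑) '' (Subtype.val '' ((↑) ⁻¹' V : Set N)) := by
      rw [Set.image_image, ← Set.image_preimage_eq V QuotientGroup.mk_surjective, Set.image_image,
        Set.image_preimage_eq V QuotientGroup.mk_surjective]
      rfl
    rw [hjV]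
    exact QuotientGroup.isOpenMap_coe _
      (hN.isOpenMap_subtype_val _ (hV.preimage QuotientGroup.continuous_mk))

end OpenSubgroup

section AdditionTheorem

variable {G : Type*} [Group G] [TopologicalSpace G] [IsTopologicalGroup G]
  [LocallyCompactSpace G] {φ : G →* G} {N H : Subgroup G}

lemma mulHtop_mulSubHom_of_isOpen [T2Space G] (hφ : Continuous φ) (hN : IsOpen (N : Set G))
    (hNφ : N ≤ N.comap φ) : mulHtop (mulSubHom φ N) = mulHtop φ :=
  mulHtop_eq_of_isOpenEmbedding N.subtype hN.isOpenEmbedding_subtypeVal hφ (map_one φ)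
    (mulSubHom_coe hNφ)

lemma mulHtop_mulSubHom_subgroupOf [T2Space G] (hφ : Continuous φ) (hN : IsOpen (N : Set G))
    (hNφ : N ≤ N.comap φ) (hH : IsClosed (H : Set G)) (hHφ : H ≤ H.comap φ) :
    mulHtop (mulSubHom (mulSubHom φ N) (H.subgroupOf N)) = mulHtop (mulSubHom φ H) := by
  have := hH.locallyCompactSpace
  refine mulHtop_eq_of_isOpenEmbedding _ (isOpenEmbedding_subgroupOfInclusion hN H)
    (continuous_mulSubHom hφ hHφ) (map_one _) fun x => Subtype.ext ?_
  rw [mulSubHom_coe hHφ]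
  exact (congrArg Subtype.val (mulSubHom_coe (subgroupOf_le_comap_mulSubHom hNφ hHφ) x)).trans
    (mulSubHom_coe hNφ _)

lemma mulHtop_mulQuotHom_subgroupOf [H.Normal] (hφ : Continuous φ) (hN : IsOpen (N : Set G))
    (hNφ : N ≤ N.comap φ) (hH : IsClosed (H : Set G)) (hHφ : H ≤ H.comap φ) :
    mulHtop (mulQuotHom (mulSubHom φ N) (H.subgroupOf N)) = mulHtop (mulQuotHom φ H) := by
  have : IsClosed (H : Set G) := hH
  refine mulHtop_eq_of_isOpenEmbedding _ (isOpenEmbedding_quotientMap_subgroupOf hN H)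
    (continuous_mulQuotHom hφ hHφ) (map_one _) ?_
  refine fun q => QuotientGroup.induction_on q fun x => ?_
  rw [mulQuotHom_mk (subgroupOf_le_comap_mulSubHom hNφ hHφ)]
  show ((mulSubHom φ N x : G) : G ⧸ H) = mulQuotHom φ H (x : G)
  rw [mulQuotHom_mk hHφ, mulSubHom_coe hNφ]

end AdditionTheorem

/-- If `N` is a fully invariant open subgroup of a locally compact group
`G` and the Addition Theorem `AT(N)` holds, then `AT(G)` holds. -/
theorem AT_of_AT_fullyInvariant_open_subgroup
    (G : Type*) [Group G] [TopologicalSpace G] [IsTopologicalGroup G]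
    [T2Space G] [LocallyCompactSpace G]
    (N : Subgroup G) (hNopen : IsOpen (N : Set G))
    (hNfull : ∀ ψ : G →* G, Continuous ψ → N ≤ N.comap ψ)
    (hATN : MulAT N) :
    MulAT G := by
  intro φ hφ H hH _ hHφ
  have hNφ := hNfull φ hφ
  rw [← mulHtop_mulSubHom_of_isOpen hφ hNopen hNφ,
    ← mulHtop_mulSubHom_subgroupOf hφ hNopen hNφ hH hHφ,
    ← mulHtop_mulQuotHom_subgroupOf hφ hNopen hNφ hH hHφ]
  exact hATN _ (continuous_mulSubHom hφ hNφ) _ (hH.preimage continuous_subtype_val)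
    inferInstance (subgroupOf_le_comap_mulSubHom hNφ hHφ)
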